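/- arXiv:2309.04029 — 2 statements merged into one kernel-verified Lean document; each statement's English description precedes it below -/
import Mathlib

section
/- Let n ≥ 1, 0 < b < min{n,2}, and α₀ < α < 2*_b with α₀ the positive root of nα² + (n−2+2b)α − 4 + 2b = 0. Set r = n(α+2)/(n−b) and p a complex number with Re p = (2−b)/α. Then 0 < Re p < n and r > max{ n/(Re p), n/(n − Re p) }. -/
/-!
Write `s = (2 - b)/α` and `q(x) = n x² + (n - 2 + 2b) x - 4 + 2b`. Clearing denominators,
`n/s < r` is equivalent to `(n - 2) α < 4 - 2b`, i.e. to `α < 2*_b` (automatic when `n ≤ 2`),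
and `n/(n - s) < r` is equivalent to `q(α) > 0`, which holds because `q(0) < 0` and `α` lies
beyond the positive root `α₀` of `q`. Finally `s < n` follows from the factorisation
`q(α) = (nα - 2 + b)(α + 2) - (n - b) α`.
-/

lemma quadratic_pos_of_pos_root_lt {a c d x₀ x : ℝ} (ha : 0 ≤ a) (hd : 0 < d) (hx₀ : 0 < x₀)
    (hroot : a * x₀ ^ 2 + c * x₀ - d = 0) (hx : x₀ < x) : 0 < a * x ^ 2 + c * x - d := by
  have hslope : 0 < a * x₀ + c := by
    by_contra! h
    nlinarith [mul_nonpos_of_nonneg_of_nonpos hx₀.le h]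
  have hdiff : a * x ^ 2 + c * x - d = (x - x₀) * (a * x + (a * x₀ + c)) := by
    linear_combination hroot
  rw [hdiff]
  exact mul_pos (sub_pos.2 hx) (by nlinarith [mul_nonneg ha (hx₀.trans hx).le])

section Exponents

variable {n b α : ℝ}

lemma two_sub_lt_mul_of_quadratic_pos (hnb : b < n) (hα : 0 < α)
    (hq : 0 < n * α ^ 2 + (n - 2 + 2 * b) * α - 4 + 2 * b) : 2 - b < n * α := by
  by_contra! h
  have hfactor : n * α ^ 2 + (n - 2 + 2 * b) * α - 4 + 2 * b
      = (n * α - (2 - b)) * (α + 2) - (n - b) * α := by ring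
  nlinarith [mul_nonpos_of_nonpos_of_nonneg (sub_nonpos.2 h) (by linarith : (0 : ℝ) ≤ α + 2),
    mul_pos (sub_pos.2 hnb) hα]

lemma div_lt_of_sub_two_mul_lt (hn : 0 < n) (hnb : b < n) (hb2 : b < 2)
    (h : (n - 2) * α < 4 - 2 * b) : n / ((2 - b) / α) < n * (α + 2) / (n - b) := by
  rw [div_div_eq_mul_div, div_lt_div_iff₀ (sub_pos.2 hb2) (sub_pos.2 hnb)]
  nlinarith [mul_lt_mul_of_pos_left h hn]

lemma div_sub_lt_of_quadratic_pos (hn : 0 < n) (hnb : b < n) (hα : 0 < α)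
    (hq : 0 < n * α ^ 2 + (n - 2 + 2 * b) * α - 4 + 2 * b) :
    n / (n - (2 - b) / α) < n * (α + 2) / (n - b) := by
  have hsub : n - (2 - b) / α = (n * α - (2 - b)) / α := by field_simp
  have hpos : 0 < n * α - (2 - b) := sub_pos.2 (two_sub_lt_mul_of_quadratic_pos hnb hα hq)
  rw [hsub, div_div_eq_mul_div, div_lt_div_iff₀ hpos (sub_pos.2 hnb)]
  nlinarith [mul_pos hn hq]

end Exponents

lemma sub_two_mul_lt_of_lt_critical {n : ℕ} {b α : ℝ} (hb2 : b < 2) (hα : 0 < α)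
    (hcrit : 3 ≤ n → α < (4 - 2 * b) / ((n : ℝ) - 2)) : ((n : ℝ) - 2) * α < 4 - 2 * b := by
  rcases le_or_gt n 2 with hle | hgt
  · have : (n : ℝ) - 2 ≤ 0 := by
      rw [sub_nonpos]; exact_mod_cast hle
    nlinarith [mul_nonpos_of_nonpos_of_nonneg this hα.le]
  · have h2 : (0 : ℝ) < (n : ℝ) - 2 := by
      rw [sub_pos]; exact_mod_cast hgt
    exact (lt_div_iff₀' h2).1 (hcrit hgt)

theorem stmt17_general (n : ℕ) (hn : 1 ≤ n) (b α α₀ : ℝ)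
    (hb2 : b < 2) (hbn : b < n)
    (hα₀pos : 0 < α₀)
    (hroot : (n : ℝ) * α₀ ^ 2 + ((n : ℝ) - 2 + 2 * b) * α₀ - 4 + 2 * b = 0)
    (hαlow : α₀ < α)
    (hαhigh : 3 ≤ n → α < (4 - 2 * b) / ((n : ℝ) - 2))
    (r : ℝ) (hr : r = (n : ℝ) * (α + 2) / ((n : ℝ) - b))
    (p : ℂ) (hp : p.re = (2 - b) / α) :
    0 < p.re ∧ p.re < n ∧ r > max ((n : ℝ) / p.re) ((n : ℝ) / ((n : ℝ) - p.re)) := by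
  have hn0 : (0 : ℝ) < n := by exact_mod_cast hn
  have hα : 0 < α := hα₀pos.trans hαlow
  have hq : 0 < (n : ℝ) * α ^ 2 + ((n : ℝ) - 2 + 2 * b) * α - 4 + 2 * b := by
    have := quadratic_pos_of_pos_root_lt (c := (n : ℝ) - 2 + 2 * b) (d := 4 - 2 * b) hn0.le (by linarith) hα₀pos
      (by linear_combination hroot) hαlow
    linarith
  rw [hp, hr]
  refine ⟨div_pos (by linarith) hα, ?_, max_lt ?_ ?_⟩
  · exact (div_lt_iff₀ hα).2 (two_sub_lt_mul_of_quadratic_pos hbn hα hq)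
  · exact div_lt_of_sub_two_mul_lt hn0 hbn hb2 (sub_two_mul_lt_of_lt_critical hb2 hα hαhigh)
  · exact div_sub_lt_of_quadratic_pos hn0 hbn hα hq

/-- for `n ≥ 1`, `0 < b < min{n,2}`, `α₀ < α < 2*_b`, `r = n(α+2)/(n−b)`
and `p ∈ ℂ` with `Re p = (2−b)/α`, one has `0 < Re p < n` and
`r > max{ n/(Re p), n/(n − Re p) }`. -/
theorem stmt17 (n : ℕ) (hn : 1 ≤ n) (b α α₀ : ℝ)
    (hb : 0 < b) (hb2 : b < 2) (hbn : b < n)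
    (hα₀pos : 0 < α₀)
    (hroot : (n : ℝ) * α₀ ^ 2 + ((n : ℝ) - 2 + 2 * b) * α₀ - 4 + 2 * b = 0)
    (hαlow : α₀ < α)
    (hαhigh : 3 ≤ n → α < (4 - 2 * b) / ((n : ℝ) - 2))
    (r : ℝ) (hr : r = (n : ℝ) * (α + 2) / ((n : ℝ) - b))
    (p : ℂ) (hp : p.re = (2 - b) / α) :
    0 < p.re ∧ p.re < n ∧ r > max ((n : ℝ) / p.re) ((n : ℝ) / ((n : ℝ) - p.re)) :=
  stmt17_general n hn b α α₀ hb2 hbn hα₀pos hroot hαlow hαhigh r hr p hp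
end

section
/- Let n ≥ 1, 0 < b < 2, α₀ < α < 2*_b, β = (4−2b−α(n−2))/(2α(α+2)), r = n(α+2)/(n−b), with r' its Hölder conjugate. Then (n/2)(1/r' − 1/r) < 1 and β(α+1) + (n/2)(1/r' − 1/r) − 1 > 0 (so both arguments of the Beta function B(1 − (n/2)(1/r'−1/r), β(α+1) + (n/2)(1/r'−1/r) − 1) appearing in the scattering estimate are positive). -/
/-!
With `D = 4 - 2b - α(n-2)`, the definitions of `β` and `r` give the two identities
`1 - (n/2)(1/r' - 1/r) = D / (2(α+2)) = αβ` and
`β(α+1) + (n/2)(1/r' - 1/r) - 1 = β(α+1) - αβ = β`.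
So both Beta arguments are positive as soon as `D > 0`, which is the upper bound `α < 2*_b`
for `n ≥ 3` and automatic for `n ≤ 2`.
-/

lemma mul_natCast_sub_two_lt {n : ℕ} {α c : ℝ} (hα : 0 ≤ α) (hc : 0 < c)
    (h : 3 ≤ n → α < c / ((n : ℝ) - 2)) : α * ((n : ℝ) - 2) < c := by
  rcases le_or_gt 3 n with h3 | h3
  · have hn2 : (0 : ℝ) < (n : ℝ) - 2 := by
      have : (3 : ℝ) ≤ n := by exact_mod_cast h3
      linarith
    exact (lt_div_iff₀ hn2).1 (h h3)
  · have hn2 : (n : ℝ) - 2 ≤ 0 := by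
      have : (n : ℝ) ≤ 2 := by exact_mod_cast (by omega : n ≤ 2)
      linarith
    exact (mul_nonpos_of_nonneg_of_nonpos hα hn2).trans_lt hc

lemma half_mul_conj_sub_eq {n b α r r' : ℝ} (hn : n ≠ 0) (hα : α + 2 ≠ 0)
    (hr : r = n * (α + 2) / (n - b)) (hr' : 1 / r + 1 / r' = 1) :
    n / 2 * (1 / r' - 1 / r) = 1 - (4 - 2 * b - α * (n - 2)) / (2 * (α + 2)) := by
  rw [show 1 / r' = 1 - 1 / r by linarith, hr, one_div_div]
  field_simp
  ring

theorem stmt18_general (n : ℕ) (hn : 1 ≤ n) (b α α₀ β r r' : ℝ)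
    (hb2 : b < 2)
    (hα₀pos : 0 < α₀)
    (hαlow : α₀ < α)
    (hαhigh : 3 ≤ n → α < (4 - 2 * b) / ((n : ℝ) - 2))
    (hβ : β = (4 - 2 * b - α * ((n : ℝ) - 2)) / (2 * α * (α + 2)))
    (hr : r = (n : ℝ) * (α + 2) / ((n : ℝ) - b))
    (hr' : 1 / r + 1 / r' = 1) :
    (n : ℝ) / 2 * (1 / r' - 1 / r) < 1 ∧
      0 < β * (α + 1) + (n : ℝ) / 2 * (1 / r' - 1 / r) - 1 := by
  have hα : 0 < α := hα₀pos.trans hαlow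
  have hD : 0 < 4 - 2 * b - α * ((n : ℝ) - 2) :=
    sub_pos.2 (mul_natCast_sub_two_lt hα.le (by linarith) hαhigh)
  have hβpos : 0 < β := hβ ▸ by positivity
  have hαβ : (4 - 2 * b - α * ((n : ℝ) - 2)) / (2 * (α + 2)) = α * β := by
    rw [hβ]
    field_simp
  have hn0 : (n : ℝ) ≠ 0 := by positivity
  rw [half_mul_conj_sub_eq hn0 (by linarith) hr hr', hαβ]
  refine ⟨sub_lt_self 1 (mul_pos hα hβpos), ?_⟩
  calc (0 : ℝ) < β := hβpos
    _ = β * (α + 1) + (1 - α * β) - 1 := by ring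

/-- with `α₀ < α < 2*_b`, `β = (4−2b−α(n−2))/(2α(α+2))`,
`r = n(α+2)/(n−b)` and `1/r + 1/r' = 1`, both `(n/2)(1/r'−1/r) < 1` and
`β(α+1) + (n/2)(1/r'−1/r) − 1 > 0`. -/
theorem stmt18 (n : ℕ) (hn : 1 ≤ n) (b α α₀ β r r' : ℝ)
    (hb : 0 < b) (hb2 : b < 2) (hbn : b < n)
    (hα₀pos : 0 < α₀)
    (hroot : (n : ℝ) * α₀ ^ 2 + ((n : ℝ) - 2 + 2 * b) * α₀ - 4 + 2 * b = 0)
    (hαlow : α₀ < α)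
    (hαhigh : 3 ≤ n → α < (4 - 2 * b) / ((n : ℝ) - 2))
    (hβ : β = (4 - 2 * b - α * ((n : ℝ) - 2)) / (2 * α * (α + 2)))
    (hr : r = (n : ℝ) * (α + 2) / ((n : ℝ) - b))
    (hr' : 1 / r + 1 / r' = 1) :
    (n : ℝ) / 2 * (1 / r' - 1 / r) < 1 ∧
      0 < β * (α + 1) + (n : ℝ) / 2 * (1 / r' - 1 / r) - 1 :=
  stmt18_general n hn b α α₀ β r r' hb2 hα₀pos hαlow hαhigh hβ hr hr'
end
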